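/- In a canonical game of 2m rounds (m ≥ 1) on ℂ^n in which the action group A of player 1 contains every n×n permutation matrix and is a proper subgroup of the action group B of player 2 (S_n ≤ A < B ≤ U(n)), player 2 has no strong winning strategy: for every sequence B_1, …, B_m ∈ B there exists a sequence A_1, …, A_m ∈ A such that B_m A_m ⋯ B_1 A_1 e_{q0} ≠ e_{qB}. -/
import Mathlib


/-- The product of the moves in a canonical `2m`-round game, namely
`B_m * A_m * ⋯ * B_1 * A_1`, where player 1 plays `A_1, …, A_m` at odd rounds and
player 2 plays `B_1, …, B_m` at even rounds. -/
noncomputable def canonicalProd {n m : ℕ} (As Bs : Fin m → Matrix (Fin n) (Fin n) ℂ) :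
    Matrix (Fin n) (Fin n) ℂ :=
  ((List.ofFn fun i => Bs i * As i).reverse).prod

/-- The product of the moves in a noncanonical `2m+1`-round game, namely
`A_{m+1} * B_m * A_m * ⋯ * B_1 * A_1`, where player 1 makes the first and the
last move. -/
noncomputable def noncanonicalProd {n m : ℕ} (As : Fin (m + 1) → Matrix (Fin n) (Fin n) ℂ)
    (Bs : Fin m → Matrix (Fin n) (Fin n) ℂ) : Matrix (Fin n) (Fin n) ℂ :=
  As (Fin.last m) * ((List.ofFn fun i : Fin m => Bs i * As i.castSucc).reverse).prod

/-- The underlying matrix of an element of a subgroup of the unitary group. -/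
noncomputable def toMat {n : ℕ} {G : Subgroup (Matrix.unitaryGroup (Fin n) ℂ)} (x : G) :
    Matrix (Fin n) (Fin n) ℂ :=
  ((x : Matrix.unitaryGroup (Fin n) ℂ) : Matrix (Fin n) (Fin n) ℂ)

/-- `G` contains (the standard matrix representation of) the symmetric group `S_n`:
every `n × n` permutation matrix belongs to `G`. -/
def containsSn {n : ℕ} (G : Subgroup (Matrix.unitaryGroup (Fin n) ℂ)) : Prop :=
  ∀ σ : Equiv.Perm (Fin n), ∃ P ∈ G,
    ((P : Matrix.unitaryGroup (Fin n) ℂ) : Matrix (Fin n) (Fin n) ℂ) = σ.permMatrix ℂ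

private lemma toMat_one {n : ℕ} {G : Subgroup (Matrix.unitaryGroup (Fin n) ℂ)} :
    toMat (1 : G) = 1 := by simp [toMat]

private lemma permMatrix_mulVec_single {n : ℕ} (σ : Equiv.Perm (Fin n)) (q : Fin n) :
    (σ.permMatrix ℂ).mulVec (Pi.single q 1) = Pi.single (σ⁻¹ q) 1 := by
  funext i
  simp only [Matrix.mulVec_single, mul_one, PEquiv.toMatrix_apply, Equiv.toPEquiv_apply,
    Option.mem_def, Option.some.injEq, Pi.single_apply]
  congr 1
  simp [eq_iff_iff, Equiv.Perm.inv_def, Equiv.eq_symm_apply, eq_comm]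

private lemma unitary_isUnit {n : ℕ} (x : Matrix.unitaryGroup (Fin n) ℂ) :
    IsUnit (x : Matrix (Fin n) (Fin n) ℂ) := ⟨Unitary.toUnits x, rfl⟩

/-- In a canonical game of `2m` rounds where the action group `A` of player 1 contains
every permutation matrix and is a proper subgroup of the action group `B` of player 2
(`S_n ≤ A < B ≤ U(n)`), player 2 has no strong winning strategy. -/
theorem canonical_A_lt_B_no_sws_player2
    (n m : ℕ) (hn : 2 ≤ n) (hm : 1 ≤ m)
    (A B : Subgroup (Matrix.unitaryGroup (Fin n) ℂ)) (hAB : A < B) (hSn : containsSn A)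
    (q0 qA qB : Fin n) (hq : qA ≠ qB)
    (Bs : Fin m → B) :
    ∃ As : Fin m → A,
      (canonicalProd (fun i => toMat (As i)) (fun i => toMat (Bs i))).mulVec
        (Pi.single q0 1) ≠ Pi.single qB 1 := by
  obtain ⟨k, rfl⟩ : ∃ k, m = k + 1 := ⟨m - 1, (Nat.succ_pred_eq_of_pos hm).symm⟩
  have hnt : Nontrivial (Fin n) := Fin.nontrivial_iff_two_le.mpr hn
  obtain ⟨r, hr⟩ : ∃ r : Fin n, r ≠ q0 := exists_ne q0
  obtain ⟨P1, hP1A, hP1⟩ := hSn 1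
  obtain ⟨P2, hP2A, hP2⟩ := hSn (Equiv.swap q0 r)
  set D : Matrix (Fin n) (Fin n) ℂ :=
    ((List.ofFn fun i : Fin k => toMat (Bs i.succ)).reverse).prod * toMat (Bs 0) with hD
  have hdec : ∀ P : A,
      canonicalProd (fun i => toMat ((fun j : Fin (k + 1) => if j = 0 then P else 1) i))
        (fun i => toMat (Bs i)) = D * toMat P := by
    intro P
    simp [canonicalProd, List.ofFn_succ, mul_assoc, Fin.succ_ne_zero, toMat_one, hD]
  by_contra h
  push_neg at h
  have hDu : IsUnit D := by
    refine (List.prod_isUnit ?_).mul (unitary_isUnit _)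
    intro x hx
    simp only [List.mem_reverse, List.mem_ofFn] at hx
    obtain ⟨i, rfl⟩ := hx
    exact unitary_isUnit _
  have hinj : Function.Injective D.mulVec := Matrix.mulVec_injective_iff_isUnit.2 hDu
  have h1 := h (fun j => if j = 0 then ⟨P1, hP1A⟩ else 1)
  have h2 := h (fun j => if j = 0 then ⟨P2, hP2A⟩ else 1)
  rw [hdec] at h1 h2
  have e1 : toMat (⟨P1, hP1A⟩ : A) = (1 : Equiv.Perm (Fin n)).permMatrix ℂ := hP1
  have e2 : toMat (⟨P2, hP2A⟩ : A) = (Equiv.swap q0 r).permMatrix ℂ := hP2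
  rw [e1, ← Matrix.mulVec_mulVec, permMatrix_mulVec_single] at h1
  rw [e2, ← Matrix.mulVec_mulVec, permMatrix_mulVec_single] at h2
  simp only [inv_one, Equiv.Perm.one_apply] at h1
  rw [show (Equiv.swap q0 r)⁻¹ q0 = r by simp [Equiv.swap_apply_right]] at h2
  have := hinj (h1.trans h2.symm)
  have := congrFun this q0
  rw [Pi.single_eq_same, Pi.single_eq_of_ne (Ne.symm hr)] at this
  exact one_ne_zero this
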